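/- Let (X, d, μ) be the product of N compact connected Riemannian manifolds (X_i, d_i, μ_i) with d²(x,y) = Σ_i d_i²(x_i,y_i) and μ = ⊗_i μ_i. Then the nonzero spectrum (with multiplicity) of the MDS operator T on X equals the disjoint union of the nonzero spectra of the operators T_i for the factors: Spec(T)\{0} = ⊔_{i=1}^N (Spec(T_i)\{0}). -/

import Mathlib

open MeasureTheory
open scoped NNReal ENNReal BoundedContinuousFunction

/-!
The kernel `-(∑ i, d_i²) / 2` of the product is the sum of the factor kernels. Hence `T = Φ ∘ B`,
where `B f = (B_i f)_i` applies `P K_i P` to `f` in the variable `x_i` and `Φ g = ∑ i, g_i (x_i)`.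
The coordinates are independent under `⊗ μ_i`, so `B_i` kills the centred function `g_j (x_j)` for
`j ≠ i` and acts as `T_i` on `g_i (x_i)`: `B ∘ Φ = ⊕ T_i`. For `c ≠ 0` the `c`-eigenspaces of
`Φ ∘ B` and `B ∘ Φ` are isomorphic, and the one of `⊕ T_i` is the product of those of the `T_i`.
These are finite-dimensional since `T_i` is compact: it maps the unit ball to uniformly bounded,
uniformly Lipschitz functions (Arzelà–Ascoli), so finrank is additive over the product.
-/

/-- The pointwise formula for the MDS operator `T = P ∘ K ∘ P` associated with a kernel `k`
and a probability measure `μ`, where `K` is integration against `k` and `P` is the projection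
onto the orthogonal complement of constants. -/
noncomputable def mdsFormula {X : Type*} [MeasurableSpace X] (k : X → X → ℝ) (μ : Measure X)
    (f : X → ℝ) (x : X) : ℝ :=
  (∫ y, k x y * (f y - ∫ z, f z ∂μ) ∂μ)
    - ∫ x', (∫ y, k x' y * (f y - ∫ z, f z ∂μ) ∂μ) ∂μ

namespace Module.End

variable {K M N : Type*} [Field K] [AddCommGroup M] [Module K M] [AddCommGroup N] [Module K N]

theorem apply_mem_eigenspace_comp {A : N →ₗ[K] M} {B : M →ₗ[K] N} {c : K} {f : M}
    (hf : f ∈ eigenspace (A ∘ₗ B) c) : B f ∈ eigenspace (B ∘ₗ A) c := by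
  rw [mem_eigenspace_iff] at hf ⊢
  rw [LinearMap.comp_apply, ← LinearMap.comp_apply A, hf, map_smul]

def eigenspaceCompEquiv (A : N →ₗ[K] M) (B : M →ₗ[K] N) {c : K} (hc : c ≠ 0) :
    eigenspace (A ∘ₗ B) c ≃ₗ[K] eigenspace (B ∘ₗ A) c where
  toFun f := ⟨B f, apply_mem_eigenspace_comp f.2⟩
  invFun g := ⟨c⁻¹ • A g, Submodule.smul_mem _ _ (apply_mem_eigenspace_comp g.2)⟩
  map_add' f g := by simp
  map_smul' r f := by simp
  left_inv f := Subtype.ext <| by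
    simp only [← LinearMap.comp_apply A B, mem_eigenspace_iff.mp f.2, inv_smul_smul₀ hc]
  right_inv g := Subtype.ext <| by
    simp only [map_smul, ← LinearMap.comp_apply B A, mem_eigenspace_iff.mp g.2,
      inv_smul_smul₀ hc]

variable {ι : Type*} {V : ι → Type*} [∀ i, AddCommGroup (V i)] [∀ i, Module K (V i)]

def eigenspacePiMapEquiv (T : ∀ i, End K (V i)) (c : K) :
    eigenspace (LinearMap.piMap T) c ≃ₗ[K] ∀ i, eigenspace (T i) c where
  toFun f i := ⟨f.1 i, mem_eigenspace_iff.mpr (congrFun (mem_eigenspace_iff.mp f.2) i)⟩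
  invFun g :=
    ⟨fun i => g i, mem_eigenspace_iff.mpr (funext fun i => mem_eigenspace_iff.mp (g i).2)⟩
  map_add' _ _ := rfl
  map_smul' _ _ := rfl

theorem finrank_eigenspace_piMap [Fintype ι] (T : ∀ i, End K (V i)) (c : K)
    [∀ i, FiniteDimensional K (eigenspace (T i) c)] :
    finrank K (eigenspace (LinearMap.piMap T) c) = ∑ i, finrank K (eigenspace (T i) c) := by
  rw [(eigenspacePiMapEquiv T c).finrank_eq, finrank_pi_fintype]

end Module.End

section Kernel

variable (α : Type*) [PseudoMetricSpace α]

noncomputable def mdsKernel (x y : α) : ℝ := -(dist x y) ^ 2 / 2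

variable {α}

theorem continuous_mdsKernel (t : α) : Continuous (mdsKernel α t) := by
  unfold mdsKernel; fun_prop

variable [BoundedSpace α]

theorem abs_mdsKernel_le (t u : α) :
    |mdsKernel α t u| ≤ Metric.diam (Set.univ : Set α) ^ 2 / 2 := by
  have h := Metric.dist_le_diam_of_mem (.all _) (Set.mem_univ t) (Set.mem_univ u)
  rw [mdsKernel, abs_div, abs_neg, abs_two, abs_of_nonneg (sq_nonneg _)]
  gcongr

theorem abs_mdsKernel_sub_le (t t' u : α) :
    |mdsKernel α t u - mdsKernel α t' u| ≤ Metric.diam (Set.univ : Set α) * dist t t' := by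
  have h := Metric.dist_le_diam_of_mem (.all _) (Set.mem_univ t) (Set.mem_univ u)
  have h' := Metric.dist_le_diam_of_mem (.all _) (Set.mem_univ t') (Set.mem_univ u)
  have hsub : |dist t u - dist t' u| ≤ dist t t' := abs_dist_sub_le t t' u
  have hfactor : mdsKernel α t u - mdsKernel α t' u =
      -((dist t u + dist t' u) / 2) * (dist t u - dist t' u) := by
    unfold mdsKernel; ring
  rw [hfactor, abs_mul, abs_neg, abs_of_nonneg (by positivity)]
  gcongr
  linarith

end Kernel

theorem abs_integral_mul_le {Ω : Type*} [MeasurableSpace Ω] {m : Measure Ω} {g h : Ω → ℝ} {C : ℝ}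
    (hg : ∀ y, |g y| ≤ C) (hh : Integrable h m) :
    |∫ y, g y * h y ∂m| ≤ C * ∫ y, |h y| ∂m := by
  rw [← integral_const_mul C fun y => |h y|, ← Real.norm_eq_abs]
  refine norm_integral_le_of_norm_le (hh.abs.const_mul C) (.of_forall fun y => ?_)
  rw [Real.norm_eq_abs, abs_mul]
  exact mul_le_mul_of_nonneg_right (hg y) (abs_nonneg _)

section KernelIntegral

variable {α : Type*} [PseudoMetricSpace α] {Ω : Type*} [MeasurableSpace Ω] (m : Measure Ω)
  (π : Ω → α)

noncomputable def mdsKP (f : Ω → ℝ) (t : α) : ℝ :=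
  ∫ y, mdsKernel α t (π y) * (f y - ∫ z, f z ∂m) ∂m

/-- `P K P f` for the kernel pulled back along `π`, as a function on `α`; for `π = id` this is
`mdsFormula (mdsKernel α) m f` by definition. -/
noncomputable def mdsPKP (f : Ω → ℝ) (t : α) : ℝ :=
  mdsKP m π f t - ∫ y, mdsKP m π f (π y) ∂m

variable {m π}

theorem mdsKP_congr_ae {f g : Ω → ℝ} (h : f =ᵐ[m] g) : mdsKP m π f = mdsKP m π g := by
  funext t
  refine integral_congr_ae ?_
  filter_upwards [h] with y hy
  rw [hy, integral_congr_ae h]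

theorem mdsPKP_congr_ae {f g : Ω → ℝ} (h : f =ᵐ[m] g) : mdsPKP m π f = mdsPKP m π g := by
  unfold mdsPKP
  rw [mdsKP_congr_ae h]

theorem mdsKP_smul (r : ℝ) (f : Ω → ℝ) : mdsKP m π (r • f) = r • mdsKP m π f := by
  funext t
  have hmean : ∫ z, r * f z ∂m = r * ∫ z, f z ∂m := integral_const_mul r _
  simp only [mdsKP, Pi.smul_apply, smul_eq_mul, hmean]
  rw [← integral_const_mul r fun y => mdsKernel α t (π y) * (f y - ∫ z, f z ∂m)]
  congr 1 with y
  ring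

theorem mdsPKP_smul (r : ℝ) (f : Ω → ℝ) : mdsPKP m π (r • f) = r • mdsPKP m π f := by
  funext t
  simp only [mdsPKP, mdsKP_smul, Pi.smul_apply, smul_eq_mul, integral_const_mul]
  ring

variable [IsFiniteMeasure m] [BoundedSpace α] {f : Ω → ℝ}

theorem abs_mdsKP_le (hf : Integrable f m) (t : α) :
    |mdsKP m π f t| ≤ Metric.diam (Set.univ : Set α) ^ 2 / 2 * ∫ y, |f y - ∫ z, f z ∂m| ∂m :=
  abs_integral_mul_le (fun y => abs_mdsKernel_le t (π y)) (hf.sub (integrable_const _))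

variable [MeasurableSpace α] [OpensMeasurableSpace α] (hπ : Measurable π)
include hπ

theorem integrable_mdsKernel_mul (hf : Integrable f m) (t : α) (c : ℝ) :
    Integrable (fun y => mdsKernel α t (π y) * (f y - c)) m :=
  (hf.sub (integrable_const c)).bdd_mul
    ((continuous_mdsKernel t).measurable.comp hπ).aestronglyMeasurable
    (.of_forall fun y => abs_mdsKernel_le t (π y))

theorem mdsKP_add {g : Ω → ℝ} (hf : Integrable f m) (hg : Integrable g m) :
    mdsKP m π (f + g) = mdsKP m π f + mdsKP m π g := by
  funext t
  have hmean : ∫ z, f z + g z ∂m = (∫ z, f z ∂m) + ∫ z, g z ∂m := integral_add hf hg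
  simp only [mdsKP, Pi.add_apply, hmean]
  rw [← integral_add (integrable_mdsKernel_mul hπ hf t _) (integrable_mdsKernel_mul hπ hg t _)]
  congr 1 with y
  ring

theorem dist_mdsKP_le (hf : Integrable f m) (t t' : α) :
    dist (mdsKP m π f t) (mdsKP m π f t') ≤
      Metric.diam (Set.univ : Set α) * (∫ y, |f y - ∫ z, f z ∂m| ∂m) * dist t t' := by
  have hdiff : mdsKP m π f t - mdsKP m π f t' =
      ∫ y, (mdsKernel α t (π y) - mdsKernel α t' (π y)) * (f y - ∫ z, f z ∂m) ∂m := by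
    rw [mdsKP, mdsKP, ← integral_sub (integrable_mdsKernel_mul hπ hf t _)
      (integrable_mdsKernel_mul hπ hf t' _)]
    congr 1 with y
    ring
  rw [Real.dist_eq, hdiff]
  refine (abs_integral_mul_le (h := fun y => f y - ∫ z, f z ∂m)
    (fun y => abs_mdsKernel_sub_le t t' (π y)) (hf.sub (integrable_const _))).trans_eq ?_
  ring

theorem continuous_mdsKP (hf : Integrable f m) : Continuous (mdsKP m π f) :=
  (LipschitzWith.of_dist_le' (dist_mdsKP_le hπ hf)).continuous

theorem integrable_mdsKP_comp (hf : Integrable f m) :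
    Integrable (fun y => mdsKP m π f (π y)) m :=
  .of_bound ((continuous_mdsKP hπ hf).measurable.comp hπ).aestronglyMeasurable _
    (.of_forall fun y => abs_mdsKP_le hf (π y))

theorem mdsPKP_add {g : Ω → ℝ} (hf : Integrable f m) (hg : Integrable g m) :
    mdsPKP m π (f + g) = mdsPKP m π f + mdsPKP m π g := by
  funext t
  simp only [mdsPKP, mdsKP_add hπ hf hg, Pi.add_apply,
    integral_add (integrable_mdsKP_comp hπ hf) (integrable_mdsKP_comp hπ hg)]
  ring

theorem lipschitzWith_mdsPKP (hf : Integrable f m) :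
    LipschitzWith (Metric.diam (Set.univ : Set α) * ∫ y, |f y - ∫ z, f z ∂m| ∂m).toNNReal
      (mdsPKP m π f) :=
  .of_dist_le' fun t t' => by simpa only [mdsPKP, dist_sub_right] using dist_mdsKP_le hπ hf t t'

end KernelIntegral

theorem BoundedContinuousFunction.isCompact_setOf_lipschitzWith_norm_le {α β : Type*}
    [PseudoMetricSpace α] [CompactSpace α] [SeminormedAddCommGroup β] [ProperSpace β]
    (K : ℝ≥0) (B : ℝ) : IsCompact {h : α →ᵇ β | LipschitzWith K h ∧ ‖h‖ ≤ B} := by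
  refine arzela_ascoli₂ (Metric.closedBall 0 B) (isCompact_closedBall 0 B) _ ?_ ?_ ?_
  · have hLip : IsClosed {h : α →ᵇ β | LipschitzWith K h} :=
      (isClosed_setOfPred_lipschitzWith (α := α) (β := β) K).preimage continuous_coe
    exact hLip.inter (isClosed_le continuous_norm continuous_const)
  · rintro h t ⟨-, hB⟩
    exact mem_closedBall_zero_iff.mpr ((h.norm_coe_le_norm t).trans hB)
  · exact (LipschitzWith.uniformEquicontinuous _ K fun h => h.2.1).equicontinuous

namespace MeasureTheory.Lp

variable {Ω : Type*} [MeasurableSpace Ω] {m : Measure Ω}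

theorem integrable [IsFiniteMeasure m] {E : Type*} [NormedAddCommGroup E] {p : ℝ≥0∞}
    [Fact (1 ≤ p)] (f : Lp E p m) : Integrable f m :=
  (Lp.memLp f).integrable Fact.out

variable [IsProbabilityMeasure m]

theorem integral_abs_le_norm (f : Lp ℝ 2 m) : ∫ y, |f y| ∂m ≤ ‖f‖ := by
  have hle : eLpNorm f 1 m ≤ eLpNorm f 2 m :=
    eLpNorm_le_eLpNorm_of_exponent_le (by norm_num) (Lp.aestronglyMeasurable f)
  simp only [← Real.norm_eq_abs]
  rw [integral_norm_eq_lintegral_enorm (Lp.aestronglyMeasurable f),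
    ← eLpNorm_one_eq_lintegral_enorm, Lp.norm_def]
  exact ENNReal.toReal_mono (Lp.eLpNorm_ne_top f) hle

theorem integral_abs_sub_integral_le (f : Lp ℝ 2 m) :
    ∫ y, |f y - ∫ z, f z ∂m| ∂m ≤ 2 * ‖f‖ := by
  have hf := Lp.integrable f
  have hmean : |∫ z, f z ∂m| ≤ ∫ y, |f y| ∂m := abs_integral_le_integral_abs
  calc ∫ y, |f y - ∫ z, f z ∂m| ∂m ≤ ∫ y, (|f y| + |∫ z, f z ∂m|) ∂m :=
        integral_mono (hf.sub (integrable_const _)).abs (hf.abs.add (integrable_const _))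
          fun y => abs_sub _ _
    _ = (∫ y, |f y| ∂m) + |∫ z, f z ∂m| := by simp [integral_add hf.abs (integrable_const _)]
    _ ≤ 2 * ‖f‖ := by linarith [integral_abs_le_norm f]

end MeasureTheory.Lp

section MdsOperator

variable {α : Type*} [PseudoMetricSpace α] [BoundedSpace α] {Ω : Type*} [MeasurableSpace Ω]
  {m : Measure Ω} [IsProbabilityMeasure m] {π : Ω → α} {f : Ω → ℝ}

theorem abs_mdsPKP_le (hf : Integrable f m) (t : α) :
    |mdsPKP m π f t| ≤ Metric.diam (Set.univ : Set α) ^ 2 * ∫ y, |f y - ∫ z, f z ∂m| ∂m := by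
  have hmean : |∫ y, mdsKP m π f (π y) ∂m| ≤
      Metric.diam (Set.univ : Set α) ^ 2 / 2 * ∫ y, |f y - ∫ z, f z ∂m| ∂m := by
    simpa using norm_integral_le_of_norm_le_const (μ := m) (f := fun y => mdsKP m π f (π y))
      (.of_forall fun y => abs_mdsKP_le hf (π y))
  calc |mdsPKP m π f t| ≤ |mdsKP m π f t| + |∫ y, mdsKP m π f (π y) ∂m| := abs_sub _ _
    _ ≤ _ := by linarith [abs_mdsKP_le (π := π) hf t]

variable [MeasurableSpace α] [BorelSpace α] (hπ : Measurable π)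

noncomputable def mdsPKPBcf (hf : Integrable f m) : α →ᵇ ℝ :=
  .ofNormedAddCommGroup (mdsPKP m π f) (lipschitzWith_mdsPKP hπ hf).continuous _ (abs_mdsPKP_le hf)

@[simp]
theorem mdsPKPBcf_apply (hf : Integrable f m) : ⇑(mdsPKPBcf hπ hf) = mdsPKP m π f := rfl

variable (ν : Measure α) [IsFiniteMeasure ν]

variable (m) in
noncomputable def mdsOp : Lp ℝ 2 m →ₗ[ℝ] Lp ℝ 2 ν where
  toFun f := BoundedContinuousFunction.toLp 2 ν ℝ (mdsPKPBcf hπ (Lp.integrable f))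
  map_add' f g := by
    rw [← map_add]
    congr 1
    ext t
    simp only [BoundedContinuousFunction.coe_add, Pi.add_apply, mdsPKPBcf_apply]
    rw [mdsPKP_congr_ae (Lp.coeFn_add f g), mdsPKP_add hπ (Lp.integrable f)
      (Lp.integrable g), Pi.add_apply]
  map_smul' r f := by
    rw [← map_smul]
    congr 1
    ext t
    simp only [BoundedContinuousFunction.coe_smul, mdsPKPBcf_apply, RingHom.id_apply]
    rw [mdsPKP_congr_ae (Lp.coeFn_smul r f), mdsPKP_smul, Pi.smul_apply]

theorem coeFn_mdsOp (f : Lp ℝ 2 m) : mdsOp m hπ ν f =ᵐ[ν] mdsPKP m π f :=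
  BoundedContinuousFunction.coeFn_toLp 2 ν ℝ _

variable (m) in
theorem isCompactOperator_mdsOp [CompactSpace α] : IsCompactOperator (mdsOp m hπ ν) := by
  set D := Metric.diam (Set.univ : Set α)
  refine ⟨BoundedContinuousFunction.toLp 2 ν ℝ ''
      {h | LipschitzWith (D * 2).toNNReal h ∧ ‖h‖ ≤ D ^ 2 * 2},
    (BoundedContinuousFunction.isCompact_setOf_lipschitzWith_norm_le _ _).image
      (BoundedContinuousFunction.toLp 2 ν ℝ).continuous,
    Filter.mem_of_superset (Metric.ball_mem_nhds 0 one_pos) fun f hf => ?_⟩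
  have hf' := Lp.integrable f
  have hI : ∫ y, |f y - ∫ z, f z ∂m| ∂m ≤ 2 :=
    (Lp.integral_abs_sub_integral_le f).trans (by linarith [mem_ball_zero_iff.mp hf])
  refine ⟨mdsPKPBcf hπ hf', ⟨?_, ?_⟩, rfl⟩
  · exact (lipschitzWith_mdsPKP hπ hf').weaken (Real.toNNReal_le_toNNReal (by gcongr))
  · exact (BoundedContinuousFunction.norm_le (by positivity)).mpr fun t =>
      (abs_mdsPKP_le hf' t).trans (by gcongr)

end MdsOperator

theorem mdsFormula_sum_eq {ι : Type*} [Fintype ι] {X : ι → Type*} [∀ i, PseudoMetricSpace (X i)]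
    [∀ i, BoundedSpace (X i)] [∀ i, MeasurableSpace (X i)] [∀ i, OpensMeasurableSpace (X i)]
    {Ω : Type*} [MeasurableSpace Ω] {m : Measure Ω} [IsFiniteMeasure m] {π : ∀ i, Ω → X i}
    (hπ : ∀ i, Measurable (π i)) {f : Ω → ℝ} (hf : Integrable f m) (x : Ω) :
    mdsFormula (fun x y => ∑ i, mdsKernel (X i) (π i x) (π i y)) m f x =
      ∑ i, mdsPKP m (π i) f (π i x) := by
  have hKP : ∀ x, ∫ y, (∑ i, mdsKernel (X i) (π i x) (π i y)) * (f y - ∫ z, f z ∂m) ∂m =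
      ∑ i, mdsKP m (π i) f (π i x) := fun x => by
    simp only [Finset.sum_mul]
    exact integral_finsetSum _ fun i _ => integrable_mdsKernel_mul (hπ i) hf _ _
  simp only [mdsFormula, hKP, mdsPKP, Finset.sum_sub_distrib]
  rw [integral_finsetSum _ fun i _ => integrable_mdsKP_comp (hπ i) hf]

section Pullback

variable {ι : Type*} [Fintype ι] {X : ι → Type*} [∀ i, MeasurableSpace (X i)]
  (μ : ∀ i, Measure (X i)) [∀ i, IsProbabilityMeasure (μ i)]

noncomputable def evalPullback (i : ι) : Lp ℝ 2 (μ i) →ₗ[ℝ] Lp ℝ 2 (Measure.pi μ) :=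
  Lp.compMeasurePreservingₗ ℝ (fun y => y i) (measurePreserving_eval μ i)

noncomputable def pullbackSum : (∀ i, Lp ℝ 2 (μ i)) →ₗ[ℝ] Lp ℝ 2 (Measure.pi μ) :=
  ∑ i, evalPullback μ i ∘ₗ LinearMap.proj i

variable {μ}

theorem coeFn_evalPullback {i : ι} (g : Lp ℝ 2 (μ i)) :
    evalPullback μ i g =ᵐ[Measure.pi μ] fun x => g (x i) :=
  Lp.coeFn_compMeasurePreserving _ _

theorem coeFn_pullbackSum (g : ∀ i, Lp ℝ 2 (μ i)) :
    pullbackSum μ g =ᵐ[Measure.pi μ] fun x => ∑ i, g i (x i) := by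
  have hsum : pullbackSum μ g = ∑ i, evalPullback μ i (g i) := by simp [pullbackSum]
  rw [hsum]
  filter_upwards [Lp.coeFn_fun_finsetSum Finset.univ fun i => evalPullback μ i (g i),
    ae_all_iff.mpr fun i => coeFn_evalPullback (g i)] with x hx hterm
  rw [hx]
  exact Finset.sum_congr rfl fun i _ => hterm i

end Pullback

section Product

variable {ι : Type*} [Fintype ι] {X : ι → Type*} [∀ i, PseudoMetricSpace (X i)]
  [∀ i, MeasurableSpace (X i)] [∀ i, BorelSpace (X i)]
  {μ : ∀ i, Measure (X i)} [∀ i, IsProbabilityMeasure (μ i)]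

theorem mdsPKP_pi_comp_eval_of_ne {i j : ι} (hij : i ≠ j) {g : X j → ℝ}
    (hg : Integrable g (μ j)) :
    mdsPKP (Measure.pi μ) (fun y => y i) (fun y => g (y j)) = 0 := by
  have hindep :
      ProbabilityTheory.IndepFun (fun y : ∀ k, X k => y i) (fun y => y j) (Measure.pi μ) :=
    (ProbabilityTheory.iIndepFun_pi (X := fun _ => id) fun _ => aemeasurable_id).indepFun hij
  have hKP : mdsKP (Measure.pi μ) (fun y => y i) (fun y => g (y j)) = 0 := by
    funext t
    have hcentered : ∫ y, (g (y j) - ∫ z, g (z j) ∂Measure.pi μ) ∂Measure.pi μ = 0 := by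
      rw [integral_sub (integrable_comp_eval hg) (integrable_const _)]
      simp
    refine (hindep.integral_fun_comp_mul_comp (f := mdsKernel (X i) t)
      (g := fun u => g u - ∫ z, g (z j) ∂Measure.pi μ) (measurable_pi_apply i).aemeasurable
      (measurable_pi_apply j).aemeasurable ?_ ?_).trans ?_
    · rw [(measurePreserving_eval μ i).map_eq]
      exact (continuous_mdsKernel t).aestronglyMeasurable
    · rw [(measurePreserving_eval μ j).map_eq]
      exact hg.aestronglyMeasurable.sub aestronglyMeasurable_const
    · rw [hcentered, mul_zero, Pi.zero_apply]
  funext t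
  simp [mdsPKP, hKP]

variable [∀ i, BoundedSpace (X i)]

theorem mdsPKP_pi_comp_eval {i : ι} {g : X i → ℝ} (hg : Integrable g (μ i)) :
    mdsPKP (Measure.pi μ) (fun y => y i) (fun y => g (y i)) = mdsPKP (μ i) id g := by
  have hKP : mdsKP (Measure.pi μ) (fun y => y i) (fun y => g (y i)) = mdsKP (μ i) id g := by
    funext t
    simp only [mdsKP, integral_comp_eval hg.aestronglyMeasurable]
    exact integral_comp_eval (((continuous_mdsKernel t).aestronglyMeasurable).mul
      (hg.aestronglyMeasurable.sub aestronglyMeasurable_const))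
  funext t
  rw [mdsPKP, mdsPKP, hKP,
    integral_comp_eval (continuous_mdsKP measurable_id hg).aestronglyMeasurable]
  rfl

variable (μ) in
noncomputable def mdsComponents : Lp ℝ 2 (Measure.pi μ) →ₗ[ℝ] ∀ i, Lp ℝ 2 (μ i) :=
  LinearMap.pi fun i => mdsOp (Measure.pi μ) (measurable_pi_apply i) (μ i)

theorem mdsOp_evalPullback_self {i : ι} (g : Lp ℝ 2 (μ i)) :
    mdsOp (Measure.pi μ) (measurable_pi_apply i) (μ i) (evalPullback μ i g) =
      mdsOp (μ i) measurable_id (μ i) g := by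
  have h : mdsPKP (Measure.pi μ) (fun y => y i) (evalPullback μ i g) = mdsPKP (μ i) id g := by
    rw [mdsPKP_congr_ae (coeFn_evalPullback g), mdsPKP_pi_comp_eval (Lp.integrable g)]
  exact Lp.ext ((coeFn_mdsOp _ _ _).trans (h ▸ (coeFn_mdsOp _ _ _).symm))

theorem mdsOp_evalPullback_of_ne {i j : ι} (hij : i ≠ j) (g : Lp ℝ 2 (μ j)) :
    mdsOp (Measure.pi μ) (measurable_pi_apply i) (μ i) (evalPullback μ j g) = 0 := by
  have h : mdsPKP (Measure.pi μ) (fun y => y i) (evalPullback μ j g) = 0 := by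
    rw [mdsPKP_congr_ae (coeFn_evalPullback g),
      mdsPKP_pi_comp_eval_of_ne hij (Lp.integrable g)]
  exact Lp.ext ((coeFn_mdsOp _ _ _).trans (h ▸ (Lp.coeFn_zero _ _ _).symm))

variable (μ) in
theorem mdsComponents_comp_pullbackSum :
    mdsComponents μ ∘ₗ pullbackSum μ =
      LinearMap.piMap fun i => mdsOp (μ i) measurable_id (μ i) := by
  refine LinearMap.ext fun g => funext fun i => ?_
  simp only [mdsComponents, pullbackSum, LinearMap.comp_apply, LinearMap.pi_apply,
    LinearMap.sum_apply, LinearMap.proj_apply, map_sum, LinearMap.coe_piMap, Pi.map_apply]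
  rw [Finset.sum_eq_single i (fun j _ hji => mdsOp_evalPullback_of_ne hji.symm (g j))
    (fun hi => absurd (Finset.mem_univ i) hi), mdsOp_evalPullback_self]

variable (μ) in
theorem toLinearMap_eq_pullbackSum_comp_mdsComponents
    (T : Lp ℝ 2 (Measure.pi μ) →L[ℝ] Lp ℝ 2 (Measure.pi μ))
    (hT : ∀ f : Lp ℝ 2 (Measure.pi μ), T f =ᵐ[Measure.pi μ]
      mdsFormula (fun x y => -(∑ i, dist (x i) (y i) ^ 2) / 2) (Measure.pi μ) f) :
    (T : Module.End ℝ (Lp ℝ 2 (Measure.pi μ))) = pullbackSum μ ∘ₗ mdsComponents μ := by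
  have hkernel : (fun x y : ∀ i, X i => -(∑ i, dist (x i) (y i) ^ 2) / 2) =
      fun x y => ∑ i, mdsKernel (X i) (x i) (y i) := by
    funext x y
    simp only [mdsKernel, ← Finset.sum_div, Finset.sum_neg_distrib]
  ext f : 1
  refine Lp.ext ((hT f).trans ?_)
  have hf : Integrable f (Measure.pi μ) := Lp.integrable f
  have hcomp : ∀ i, (fun x => mdsComponents μ f i (x i)) =ᵐ[Measure.pi μ]
      fun x => mdsPKP (Measure.pi μ) (fun y => y i) f (x i) := fun i =>
    (measurePreserving_eval μ i).quasiMeasurePreserving.ae_eq_comp (coeFn_mdsOp _ _ f)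
  filter_upwards [coeFn_pullbackSum (mdsComponents μ f), ae_all_iff.mpr hcomp] with x hx hcomp
  rw [hkernel, LinearMap.comp_apply, hx, mdsFormula_sum_eq (fun i => measurable_pi_apply i) hf x]
  exact Finset.sum_congr rfl fun i _ => (hcomp i).symm

end Product

theorem mds_spectrum_of_product
    (N : ℕ) (X : Fin N → Type*)
    [∀ i, MetricSpace (X i)] [∀ i, CompactSpace (X i)]
    [∀ i, MeasurableSpace (X i)] [∀ i, BorelSpace (X i)]
    (μ : ∀ i, Measure (X i)) [∀ i, IsProbabilityMeasure (μ i)]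
    (T : Lp ℝ 2 (Measure.pi μ) →L[ℝ] Lp ℝ 2 (Measure.pi μ))
    (Ti : ∀ i, Lp ℝ 2 (μ i) →L[ℝ] Lp ℝ 2 (μ i))
    (hT : ∀ f : Lp ℝ 2 (Measure.pi μ),
      ⇑(T f) =ᵐ[Measure.pi μ]
        mdsFormula (fun x y => -(∑ i, dist (x i) (y i) ^ 2) / 2) (Measure.pi μ) f)
    (hTi : ∀ i, ∀ f : Lp ℝ 2 (μ i),
      ⇑(Ti i f) =ᵐ[μ i] mdsFormula (fun x y => -(dist x y) ^ 2 / 2) (μ i) f) :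
    ∀ c : ℝ, c ≠ 0 →
      Module.finrank ℝ (Module.End.eigenspace (T : Module.End ℝ (Lp ℝ 2 (Measure.pi μ))) c)
        = ∑ i, Module.finrank ℝ (Module.End.eigenspace (Ti i : Module.End ℝ (Lp ℝ 2 (μ i))) c) := by
  intro c hc
  have hTi_eq : ∀ i, ⇑(Ti i) = mdsOp (μ i) measurable_id (μ i) := fun i =>
    funext fun f => Lp.ext ((hTi i f).trans (coeFn_mdsOp measurable_id (μ i) f).symm)
  have : ∀ i, FiniteDimensional ℝ (Module.End.eigenspace (Ti i : Module.End ℝ (Lp ℝ 2 (μ i))) c) :=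
    fun i => (Ti i).finite_dimensional_eigenspace
      (hTi_eq i ▸ isCompactOperator_mdsOp (μ i) measurable_id (μ i)) c hc
  have hTi_lin : LinearMap.piMap (fun i => mdsOp (μ i) measurable_id (μ i)) =
      LinearMap.piMap fun i => (Ti i : Module.End ℝ (Lp ℝ 2 (μ i))) :=
    congrArg LinearMap.piMap (funext fun i => LinearMap.ext fun f => (congrFun (hTi_eq i) f).symm)
  rw [toLinearMap_eq_pullbackSum_comp_mdsComponents μ T hT,
    (Module.End.eigenspaceCompEquiv _ _ hc).finrank_eq, mdsComponents_comp_pullbackSum, hTi_lin,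
    Module.End.finrank_eigenspace_piMap]
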